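/- Let R be a commutative Noetherian ring of prime characteristic p and let b be an ideal of R. Then the sequence ((b^{[p^n]})^F)_{n∈ℕ} of F-closures of the Frobenius powers of b is an f-sequence. -/

import Mathlib

/-- The ideal `b^{[p^n]}` generated by `p^n`-th powers of elements of `b`. -/
def FrobPow {R : Type*} [CommRing R] (p n : ℕ) (b : Ideal R) : Ideal R :=
  Ideal.span ((fun x => x ^ p ^ n) '' (b : Set R))

/-- The `F`-closure of an ideal, as a set. -/
def FClosureSet {R : Type*} [CommRing R] (p : ℕ) (b : Ideal R) : Set R :=
  {r | ∃ n : ℕ, r ^ p ^ n ∈ FrobPow p n b}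

/-! Since `(b^{[p^n]})^{[p^m]} = b^{[p^(m+n)]}`, both `r ∈ (b^{[p^n]})^F` and
`r^p ∈ (b^{[p^(n+1)]})^F` say that `r^{p^k} ∈ b^{[p^(k+n)]}` for some `k`: going up, raise
such a relation to the `p`-th power; going down, read `(r^p)^{p^m}` as `r^{p^(m+1)}`. -/

section FrobeniusPowers

variable {R : Type*} [CommRing R] (p : ℕ)

lemma pow_mem_frobPow {b : Ideal R} {x : R} (hx : x ∈ b) (n : ℕ) : x ^ p ^ n ∈ FrobPow p n b :=
  Ideal.subset_span ⟨x, hx, rfl⟩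

variable [ExpChar R p]

lemma frobPow_eq_map (n : ℕ) (b : Ideal R) : FrobPow p n b = b.map (iterateFrobenius R p n) :=
  rfl

lemma frobPow_frobPow (m n : ℕ) (b : Ideal R) :
    FrobPow p m (FrobPow p n b) = FrobPow p (m + n) b := by
  simp only [frobPow_eq_map, Ideal.map_map, iterateFrobenius_add]

lemma mem_fClosureSet_frobPow_iff {n : ℕ} {b : Ideal R} {r : R} :
    r ∈ FClosureSet p (FrobPow p n b) ↔ ∃ m, r ^ p ^ m ∈ FrobPow p (m + n) b := by
  simp only [FClosureSet, Set.mem_ofPred_eq, frobPow_frobPow]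

end FrobeniusPowers

theorem fClosure_frobeniusPowers_fSequence_general {R : Type*} [CommRing R]
    (p : ℕ) (hp : p.Prime) [CharP R p] (b : Ideal R) :
    ∀ (n : ℕ) (r : R),
      r ∈ FClosureSet p (FrobPow p n b) ↔ r ^ p ∈ FClosureSet p (FrobPow p (n + 1) b) := by
  have : ExpChar R p := ExpChar.prime hp
  intro n r
  simp only [mem_fClosureSet_frobPow_iff]
  constructor
  · rintro ⟨m, hm⟩
    refine ⟨m, ?_⟩
    have hpow := pow_mem_frobPow p hm 1
    rwa [frobPow_frobPow, pow_one, ← pow_mul, mul_comm, pow_mul, add_comm 1, add_assoc] at hpow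
  · rintro ⟨m, hm⟩
    refine ⟨m + 1, ?_⟩
    rwa [← pow_mul, ← pow_succ', ← add_assoc, add_right_comm] at hm

theorem fClosure_frobeniusPowers_fSequence {R : Type*} [CommRing R] [IsNoetherianRing R]
    (p : ℕ) (hp : p.Prime) [CharP R p] (b : Ideal R) :
    ∀ (n : ℕ) (r : R),
      r ∈ FClosureSet p (FrobPow p n b) ↔ r ^ p ∈ FClosureSet p (FrobPow p (n + 1) b) :=
  fClosure_frobeniusPowers_fSequence_general p hp b
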